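/- arXiv:1311.1721 — 12 statements merged into one kernel-verified Lean document; each statement's English description precedes it below -/
import Mathlib

section
/- If a poset X is left Kan-injective in Pos with respect to all order-embeddings (i.e., for every order-embedding h : A → A' and every monotone f : A → X there exists a least monotone g : A' → X with g ∘ h = f), then X is a complete join-semilattice. -/
/-!
For `S ⊆ X`, extend the inclusion `S → X` along the order-embedding `S ↪ WithTop S`. Any
extension sends `⊤` to an upper bound of `S`; conversely every upper bound `x` of `S` gives an
extension sending `⊤` to `x`. So the value at `⊤` of the least extension is the supremum of `S`.
-/

theorem isLUB_range_of_isLeast_withTop_extension {A X : Type*} [Preorder A] [Preorder X]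
    (f : A →o X) (g : WithTop A →o X)
    (hext : g.comp WithTop.coeOrderHom.toOrderHom = f)
    (hleast : ∀ g' : WithTop A →o X, f ≤ g'.comp WithTop.coeOrderHom.toOrderHom → g ≤ g') :
    IsLUB (Set.range f) (g ⊤) := by
  constructor
  · rintro _ ⟨a, rfl⟩
    rw [← hext]
    exact g.monotone le_top
  · intro x hx
    let g' : WithTop A →o X :=
      ⟨fun o => o.elim x f, WithTop.monotone_iff.2 ⟨f.monotone, fun a => hx ⟨a, rfl⟩⟩⟩
    exact hleast g' (fun _ => le_rfl) ⊤

/-- If a poset `X` is left Kan-injective in `Pos` with respect to all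
order-embeddings, then `X` is a complete join-semilattice (every subset has a
least upper bound). -/
theorem stmt1 {X : Type} [PartialOrder X]
    (hinj : ∀ (A A' : Type) [PartialOrder A] [PartialOrder A'] (h : A →o A'),
      (∀ a b : A, h a ≤ h b ↔ a ≤ b) →
      ∀ f : A →o X, ∃ g : A' →o X, g.comp h = f ∧
        ∀ g' : A' →o X, f ≤ g'.comp h → g ≤ g') :
    ∀ S : Set X, ∃ s : X, IsLUB S s := by
  intro S
  obtain ⟨g, hext, hleast⟩ := hinj S (WithTop S) WithTop.coeOrderHom.toOrderHom
    (fun _ _ => WithTop.coe_le_coe) (OrderHom.Subtype.val (· ∈ S))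
  refine ⟨g ⊤, ?_⟩
  simpa only [OrderHom.Subtype.val_coe, Subtype.range_coe_subtype, Set.ofPred_mem_eq] using
    isLUB_range_of_isLeast_withTop_extension _ g hext hleast
end

section
/- A monotone map p : X → Y between complete join-semilattices is left Kan-injective with respect to all order-embeddings if and only if p preserves all joins. -/
/-!
Over an order-reflecting `h`, left Kan extensions into a complete lattice are computed pointwise:
`(Lan_h f) a' = ⨆ {f a | h a ≤ a'}`. Hence a sup-preserving `p` commutes with them. Conversely,
the Kan extension of the inclusion `S ↪ X` along itself, evaluated at `sSup S`, is `sSup S`,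
while that of `p ∘ (S ↪ X)` is `sSup (p '' S)`; Kan-injectivity forces these to agree.
-/

/-- `g` is the left Kan extension of `f` along `h` in `Pos`, in the strong sense:
`g ∘ h = f` and `g` is least among monotone `g'` with `f ≤ g' ∘ h`. -/
def IsLanPos {A A' X : Type} [PartialOrder A] [PartialOrder A'] [PartialOrder X]
    (h : A →o A') (f : A →o X) (g : A' →o X) : Prop :=
  g.comp h = f ∧ ∀ g' : A' →o X, f ≤ g'.comp h → g ≤ g'

theorem IsLanPos.unique {A A' X : Type} [PartialOrder A] [PartialOrder A'] [PartialOrder X]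
    {h : A →o A'} {f : A →o X} {g₁ g₂ : A' →o X}
    (h₁ : IsLanPos h f g₁) (h₂ : IsLanPos h f g₂) : g₁ = g₂ :=
  le_antisymm (h₁.2 g₂ h₂.1.ge) (h₂.2 g₁ h₁.1.ge)

namespace OrderHom

variable {A A' X : Type} [PartialOrder A] [PartialOrder A'] [CompleteLattice X]

def lan (h : A →o A') (f : A →o X) : A' →o X where
  toFun a' := sSup (f '' {a | h a ≤ a'})
  monotone' _ _ hle := sSup_le_sSup (Set.image_mono fun _ ha => ha.trans hle)

theorem lan_apply (h : A →o A') (f : A →o X) (a' : A') :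
    h.lan f a' = sSup (f '' {a | h a ≤ a'}) :=
  rfl

theorem isLanPos_lan (h : A →o A') (hrefl : ∀ a b, h a ≤ h b → a ≤ b) (f : A →o X) :
    IsLanPos h f (h.lan f) := by
  refine ⟨?_, fun g hfg a' => sSup_le ?_⟩
  · ext a
    refine le_antisymm (sSup_le ?_) (le_sSup ⟨a, le_rfl, rfl⟩)
    rintro _ ⟨b, hb, rfl⟩
    exact f.mono (hrefl b a hb)
  · rintro _ ⟨a, ha, rfl⟩
    exact (hfg a).trans (g.mono ha)

theorem isLanPos_iff_eq_lan (h : A →o A') (hrefl : ∀ a b, h a ≤ h b → a ≤ b)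
    (f : A →o X) (g : A' →o X) : IsLanPos h f g ↔ g = h.lan f :=
  ⟨fun hg => hg.unique (isLanPos_lan h hrefl f), fun hg => hg ▸ isLanPos_lan h hrefl f⟩

theorem comp_lan {Y : Type} [CompleteLattice Y] {p : X →o Y}
    (hp : ∀ S : Set X, p (sSup S) = sSup (p '' S)) (h : A →o A') (f : A →o X) :
    p.comp (h.lan f) = h.lan (p.comp f) := by
  ext a'
  rw [comp_coe, Function.comp_apply, lan_apply, lan_apply, hp, ← Set.image_comp]
  rfl

theorem lan_apply_iSup {Z : Type} [CompleteLattice Z] (h : A →o Z) (f : A →o X) :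
    h.lan f (⨆ a, h a) = sSup (Set.range f) := by
  have hall : {a | h a ≤ ⨆ a, h a} = Set.univ :=
    Set.eq_univ_of_forall fun a => le_iSup h a
  rw [lan_apply, hall, Set.image_univ]

end OrderHom

open OrderHom in
/-- A monotone map `p : X → Y` between complete join-semilattices is
left Kan-injective with respect to all order-embeddings iff `p` preserves all
joins. -/
theorem stmt2 {X Y : Type} [CompleteLattice X] [CompleteLattice Y] (p : X →o Y) :
    (∀ (A A' : Type) [PartialOrder A] [PartialOrder A'] (h : A →o A'),
      (∀ a b : A, h a ≤ h b ↔ a ≤ b) →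
      ∀ (f : A →o X) (g : A' →o X) (g' : A' →o Y),
        IsLanPos h f g → IsLanPos h (p.comp f) g' → p.comp g = g') ↔
    (∀ S : Set X, p (sSup S) = sSup (p '' S)) := by
  constructor
  · intro hinj S
    let ι := OrderHom.Subtype.val (· ∈ S)
    have hrefl : ∀ a b, ι a ≤ ι b → a ≤ b := fun _ _ => id
    have hcomm := DFunLike.congr_fun
      (hinj S X ι (fun _ _ => Iff.rfl) ι _ _ (isLanPos_lan ι hrefl ι)
        (isLanPos_lan ι hrefl (p.comp ι))) (⨆ a, ι a)
    rwa [comp_coe, Function.comp_apply, lan_apply_iSup, lan_apply_iSup, comp_coe, Set.range_comp,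
      show Set.range ι = S from Subtype.range_coe] at hcomm
  · intro hp A A' _ _ h hemb f g g' hg hg'
    rw [isLanPos_iff_eq_lan h (fun a b => (hemb a b).1)] at hg hg'
    rw [hg, hg', comp_lan hp]
end

section
/- Let H be a class of monotone maps in Pos such that some h : A → A' in H satisfies h(p) ≤ h(q) for elements p, q of A with p ≰ q. Then every poset X that is left Kan-injective with respect to h is discrete (x ≤ x' implies x = x'). -/
/-!
Given `x ≤ x'` in `X`, the map `A → X` sending the down-set of `q` to `x` and everything else
to `x'` is monotone. Its extension `g` along `h` satisfies `g ∘ h = f`, so `h p ≤ h q` forces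
`x' = f p ≤ f q = x`, whence `x = x'`.
-/

theorem monotone_ite_le_const {A X : Type*} [Preorder A] [Preorder X] [DecidableLE A] (q : A)
    {x x' : X} (hx : x ≤ x') : Monotone fun a => if a ≤ q then x else x' := by
  intro a b hab
  by_cases hb : b ≤ q
  · simp only [hab.trans hb, hb, if_true, le_refl]
  · simp only [hb, if_false]
    split_ifs
    exacts [hx, le_rfl]

theorem OrderHom.apply_le_apply_of_comp_eq {A A' X : Type*} [Preorder A] [Preorder A']
    [Preorder X] {h : A →o A'} {f : A →o X} {g : A' →o X} (hg : g.comp h = f) {p q : A}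
    (hpq : h p ≤ h q) : f p ≤ f q :=
  hg ▸ g.monotone hpq

/-- If `h : A → A'` is monotone with `h p ≤ h q` for some `p, q`
with `p ≰ q`, then every poset `X` left Kan-injective with respect to `h`
is discrete. -/
theorem stmt3 {A A' X : Type} [PartialOrder A] [PartialOrder A'] [PartialOrder X]
    (h : A →o A') (p q : A) (hpq : h p ≤ h q) (hnle : ¬ p ≤ q)
    (hinj : ∀ f : A →o X, ∃ g : A' →o X, g.comp h = f ∧
      ∀ g' : A' →o X, f ≤ g'.comp h → g ≤ g') :
    ∀ x x' : X, x ≤ x' → x = x' := by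
  intro x x' hxx'
  classical
  obtain ⟨g, hg, -⟩ := hinj ⟨fun a => if a ≤ q then x else x', monotone_ite_le_const q hxx'⟩
  have hx'x := OrderHom.apply_le_apply_of_comp_eq hg hpq
  simp only [OrderHom.coe_mk, hnle, le_refl, if_false, if_true] at hx'x
  exact hxx'.antisymm hx'x
end

section
/- A poset X is left Kan-injective in Pos with respect to the two embeddings ω ↪ ω+1 and ∅ ↪ 1 if and only if X has a least element and joins of all increasing ω-chains. -/
/-- The embedding `ω ↪ ω + 1` of the chain of natural numbers into its
extension by a top element. -/
def omegaEmb : ℕ →o WithTop ℕ :=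
  ⟨fun n => (n : WithTop ℕ), fun _ _ hab => WithTop.coe_le_coe.mpr hab⟩

/-- The embedding `∅ ↪ 1` of the empty poset into the one-element poset. -/
def emptyEmb : Fin 0 →o Fin 1 :=
  ⟨fun e => e.elim0, fun e => e.elim0⟩

/-!
Along `ω ↪ ω+1` a least extension of a chain must send `⊤` to its join: any upper bound `u`
gives the extension `⊤ ↦ u`, and conversely a least extension is dominated by all of these.
Along `∅ ↪ 1` every constant map is an extension, so the least one picks out a least element.
-/

namespace OrderHom

variable {α X : Type} [Preorder α] [Preorder X]

def extendTop (f : α →o X) (u : X) (hu : ∀ a, f a ≤ u) : WithTop α →o X :=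
  ⟨fun x => WithTop.recTopCoe u f x, by exact WithTop.monotone_iff.2 ⟨f.monotone, hu⟩⟩

end OrderHom

section OmegaEmb

variable {X : Type} [PartialOrder X]

theorem IsLanPos.isLUB_range_omegaEmb {f : ℕ →o X} {g : WithTop ℕ →o X}
    (hg : IsLanPos omegaEmb f g) : IsLUB (Set.range f) (g ⊤) := by
  obtain ⟨hcomp, hleast⟩ := hg
  refine ⟨?_, fun u hu => ?_⟩
  · rintro _ ⟨n, rfl⟩
    exact (DFunLike.congr_fun hcomp n).symm.trans_le (g.monotone le_top)
  · have hfu : ∀ n, f n ≤ u := fun n => hu ⟨n, rfl⟩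
    exact hleast (f.extendTop u hfu) (fun _ => le_rfl) ⊤

theorem isLanPos_omegaEmb_extendTop {f : ℕ →o X} {s : X} (hs : IsLUB (Set.range f) s) :
    IsLanPos omegaEmb f (f.extendTop s fun n => hs.1 ⟨n, rfl⟩) := by
  refine ⟨rfl, fun g' hg' x => ?_⟩
  induction x using WithTop.recTopCoe with
  | top =>
    refine hs.2 ?_
    rintro _ ⟨n, rfl⟩
    exact (hg' n).trans (g'.monotone le_top)
  | coe n => exact hg' n

theorem exists_isLanPos_omegaEmb_iff (f : ℕ →o X) :
    (∃ g, IsLanPos omegaEmb f g) ↔ ∃ s, IsLUB (Set.range f) s :=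
  ⟨fun ⟨_, hg⟩ => ⟨_, hg.isLUB_range_omegaEmb⟩,
    fun ⟨_, hs⟩ => ⟨_, isLanPos_omegaEmb_extendTop hs⟩⟩

end OmegaEmb

section EmptyEmb

variable {X : Type} [PartialOrder X]

theorem IsLanPos.isBot_emptyEmb {f : Fin 0 →o X} {g : Fin 1 →o X}
    (hg : IsLanPos emptyEmb f g) : IsBot (g 0) :=
  fun x => hg.2 (OrderHom.const _ x) (fun e => e.elim0) 0

theorem isLanPos_emptyEmb_const (f : Fin 0 →o X) {b : X} (hb : IsBot b) :
    IsLanPos emptyEmb f (OrderHom.const _ b) :=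
  ⟨OrderHom.ext _ _ (funext fun e => e.elim0), fun _ _ _ => hb _⟩

theorem forall_exists_isLanPos_emptyEmb_iff :
    (∀ f : Fin 0 →o X, ∃ g, IsLanPos emptyEmb f g) ↔ ∃ b : X, IsBot b :=
  ⟨fun h => let ⟨_, hg⟩ := h ⟨Fin.elim0, fun e => e.elim0⟩; ⟨_, hg.isBot_emptyEmb⟩,
    fun ⟨_, hb⟩ f => ⟨_, isLanPos_emptyEmb_const f hb⟩⟩

end EmptyEmb

/-- A poset `X` is left Kan-injective w.r.t. `ω ↪ ω+1` and `∅ ↪ 1`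
iff `X` has a least element and joins of all increasing `ω`-chains. -/
theorem stmt4 {X : Type} [PartialOrder X] :
    ((∀ f : ℕ →o X, ∃ g : WithTop ℕ →o X, IsLanPos omegaEmb f g) ∧
     (∀ f : Fin 0 →o X, ∃ g : Fin 1 →o X, IsLanPos emptyEmb f g)) ↔
    ((∃ b : X, ∀ x : X, b ≤ x) ∧
     (∀ c : ℕ →o X, ∃ s : X, IsLUB (Set.range c) s)) := by
  rw [forall_exists_isLanPos_emptyEmb_iff, and_comm]
  exact and_congr Iff.rfl (forall_congr' exists_isLanPos_omegaEmb_iff)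
end

section
/- A poset X is left Kan-injective in Pos with respect to the embedding h of the 2-element antichain {0,1} into the poset {0,1,⊤} (with 0 ≤ ⊤, 1 ≤ ⊤, 0 and 1 incomparable) if and only if X has binary joins (X is a join-semilattice). -/
/-- The two-element antichain `{0, 1}`. -/
inductive TwoAntichain : Type
  | zero
  | one

/-- The discrete order on the two-element antichain. -/
instance : PartialOrder TwoAntichain where
  le x y := x = y
  le_refl _ := rfl
  le_trans a b c h₁ h₂ := by
    have e₁ : a = b := h₁
    have e₂ : b = c := h₂
    show a = c
    exact e₁.trans e₂
  le_antisymm _ _ h _ := h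

/-- The embedding of the two-element antichain `{0,1}` into `{0,1,⊤}`. -/
def antichainEmb : TwoAntichain →o WithTop TwoAntichain :=
  ⟨fun x => (x : WithTop TwoAntichain), fun x y hxy => by
    have e : x = y := hxy
    subst e
    exact le_refl _⟩

namespace WithTop

variable {A X : Type} [PartialOrder A] [PartialOrder X]

def extendOrderHom (f : A →o X) (u : X) (hu : u ∈ upperBounds (Set.range f)) :
    WithTop A →o X where
  toFun o := o.recTopCoe u f
  monotone' := by
    intro a b hab
    induction b using WithTop.recTopCoe with
    | top =>
      induction a using WithTop.recTopCoe with
      | top => exact le_rfl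
      | coe a => exact hu (Set.mem_range_self a)
    | coe b =>
      obtain ⟨a, rfl, hle⟩ := WithTop.le_coe_iff.mp hab
      exact f.monotone hle

lemma apply_top_mem_upperBounds (g : WithTop A →o X) :
    g ⊤ ∈ upperBounds (Set.range (g.comp coeOrderHom.toOrderHom)) := by
  rintro _ ⟨a, rfl⟩
  exact g.monotone le_top

theorem isLanPos_coe_iff (f : A →o X) (g : WithTop A →o X) :
    IsLanPos coeOrderHom.toOrderHom f g ↔
      g.comp coeOrderHom.toOrderHom = f ∧ IsLUB (Set.range f) (g ⊤) := by
  constructor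
  · rintro ⟨hext, hleast⟩
    refine ⟨hext, hext ▸ apply_top_mem_upperBounds g, fun u hu => ?_⟩
    exact hleast (extendOrderHom f u hu) le_rfl ⊤
  · rintro ⟨hext, hlub⟩
    refine ⟨hext, fun g' hg' o => ?_⟩
    induction o using WithTop.recTopCoe with
    | top =>
      refine hlub.2 fun _ ⟨a, ha⟩ => ha ▸ ?_
      exact (hg' a).trans (g'.monotone le_top)
    | coe a =>
      exact (congrArg (· a) hext).trans_le (hg' a)

end WithTop

namespace TwoAntichain

variable {X : Type} [PartialOrder X]

lemma antichainEmb_eq : antichainEmb = WithTop.coeOrderHom.toOrderHom :=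
  rfl

def pairOrderHom (x y : X) : TwoAntichain →o X where
  toFun
    | zero => x
    | one => y
  monotone' a b (hab : a = b) := hab ▸ le_rfl

lemma range_eq (f : TwoAntichain →o X) : Set.range f = {f zero, f one} := by
  ext z
  constructor
  · rintro ⟨_ | _, rfl⟩ <;> simp
  · rintro (rfl | rfl) <;> exact Set.mem_range_self _

end TwoAntichain

open TwoAntichain in
/-- A poset `X` is left Kan-injective in `Pos` w.r.t. the embedding
of the two-element antichain into `{0,1,⊤}` iff `X` has binary joins. -/
theorem stmt5 {X : Type} [PartialOrder X] :
    (∀ f : TwoAntichain →o X, ∃ g : WithTop TwoAntichain →o X, IsLanPos antichainEmb f g) ↔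
    (∀ x y : X, ∃ s : X, IsLUB {x, y} s) := by
  simp only [antichainEmb_eq, WithTop.isLanPos_coe_iff, range_eq]
  constructor
  · intro hlan x y
    obtain ⟨g, -, hlub⟩ := hlan (pairOrderHom x y)
    exact ⟨g ⊤, hlub⟩
  · intro hjoin f
    obtain ⟨s, hs⟩ := hjoin (f zero) (f one)
    refine ⟨WithTop.extendOrderHom f s ?_, rfl, hs⟩
    rw [range_eq]
    exact hs.1
end

section
/- A monotone map p : X → Y between join-semilattices is left Kan-injective with respect to the embedding of the 2-element antichain into {0,1,⊤} if and only if p preserves binary joins. -/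
namespace TwoAntichain

def pair {X : Type} [Preorder X] (x y : X) : TwoAntichain →o X :=
  ⟨fun | zero => x | one => y, fun a b (hab : a = b) => hab ▸ le_rfl⟩

variable {X : Type} [SemilatticeSup X]

def lan (f : TwoAntichain →o X) : WithTop TwoAntichain →o X where
  toFun t := t.elim (f zero ⊔ f one) f
  monotone' a b hab := by
    induction b using WithTop.recTopCoe with
    | top =>
      induction a using WithTop.recTopCoe with
      | top => exact le_rfl
      | coe a => cases a <;> [exact le_sup_left; exact le_sup_right]
    | coe b =>
      obtain ⟨a, rfl, (rfl : a = b)⟩ := WithTop.le_coe_iff.mp hab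
      exact le_rfl

@[simp]
theorem lan_top (f : TwoAntichain →o X) : lan f ⊤ = f zero ⊔ f one := rfl

theorem isLanPos_lan (f : TwoAntichain →o X) : IsLanPos antichainEmb f (lan f) := by
  refine ⟨rfl, fun g' hg' t => ?_⟩
  induction t using WithTop.recTopCoe with
  | top =>
    exact sup_le ((hg' zero).trans (g'.monotone le_top)) ((hg' one).trans (g'.monotone le_top))
  | coe a => exact hg' a

theorem comp_lan_eq_lan_comp_iff {Y : Type} [SemilatticeSup Y] (p : X →o Y)
    (f : TwoAntichain →o X) :
    p.comp (lan f) = lan (p.comp f) ↔ p (f zero ⊔ f one) = p (f zero) ⊔ p (f one) := by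
  refine ⟨fun h => by simpa using DFunLike.congr_fun h ⊤, fun h => ?_⟩
  ext t
  induction t using WithTop.recTopCoe with
  | top => exact h
  | coe a => rfl

end TwoAntichain

open TwoAntichain in
/-- A monotone map `p : X → Y` between join-semilattices is left
Kan-injective w.r.t. the embedding of the two-element antichain into `{0,1,⊤}`
iff `p` preserves binary joins. -/
theorem stmt6 {X Y : Type} [SemilatticeSup X] [SemilatticeSup Y] (p : X →o Y) :
    (∀ (f : TwoAntichain →o X) (g : WithTop TwoAntichain →o X)
        (g' : WithTop TwoAntichain →o Y),
      IsLanPos antichainEmb f g → IsLanPos antichainEmb (p.comp f) g' →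
        p.comp g = g') ↔
    (∀ x y : X, p (x ⊔ y) = p x ⊔ p y) := by
  constructor
  · intro H x y
    exact (comp_lan_eq_lan_comp_iff p (pair x y)).mp
      (H _ _ _ (isLanPos_lan _) (isLanPos_lan _))
  · intro hp f g g' hg hg'
    rw [hg.unique (isLanPos_lan f), hg'.unique (isLanPos_lan _)]
    exact (comp_lan_eq_lan_comp_iff p f).mpr (hp _ _)
end

section
/- In Pos, every surjective monotone map e : A → B is a coinserter of some parallel pair: let A₀ be the poset of pairs (x, x') ∈ A × A with e(x) ≤ e(x'), ordered pointwise, with projections d₀, d₁ : A₀ → A. Then e ∘ d₀ ≤ e ∘ d₁ pointwise, and for every monotone d : A → Z with d ∘ d₀ ≤ d ∘ d₁ pointwise there exists a unique monotone d̄ : B → Z with d = d̄ ∘ e. -/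
namespace OrderHom

variable {A B Z : Type*} [Preorder A] [Preorder B] [PartialOrder Z]

theorem existsUnique_eq_comp_of_surjective (e : A →o B) (he : Function.Surjective e)
    (d : A →o Z) (hd : ∀ x x', e x ≤ e x' → d x ≤ d x') :
    ∃! db : B →o Z, d = db.comp e := by
  have section_eq := Function.surjInv_eq he
  let db : B →o Z :=
    ⟨d ∘ Function.surjInv he, fun b b' hb ↦ hd _ _ (by rwa [section_eq, section_eq])⟩
  refine ⟨db, ?_, fun db' hdb' ↦ ?_⟩
  · ext x
    exact le_antisymm (hd _ _ (section_eq _).ge) (hd _ _ (section_eq _).le)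
  · ext b
    change db' b = d (Function.surjInv he b)
    rw [hdb', comp_coe, Function.comp_apply, section_eq]

end OrderHom

/-- In `Pos`, every surjective monotone map `e : A → B` is a
coinserter of the pair of projections `d₀, d₁ : A₀ → A`, where
`A₀ = {(x, x') | e x ≤ e x'}` with the pointwise order. -/
theorem stmt9 {A B : Type} [PartialOrder A] [PartialOrder B] (e : A →o B)
    (hsurj : Function.Surjective e)
    (d₀ : {p : A × A // e p.1 ≤ e p.2} →o A)
    (d₁ : {p : A × A // e p.1 ≤ e p.2} →o A)
    (hd₀ : ∀ p, d₀ p = p.1.1) (hd₁ : ∀ p, d₁ p = p.1.2) :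
    e.comp d₀ ≤ e.comp d₁ ∧
    (∀ (Z : Type) [PartialOrder Z] (d : A →o Z),
      d.comp d₀ ≤ d.comp d₁ → ∃! db : B →o Z, d = db.comp e) := by
  refine ⟨fun p ↦ ?_, fun Z _ d hd ↦ e.existsUnique_eq_comp_of_surjective hsurj d ?_⟩
  · simpa only [OrderHom.comp_coe, Function.comp_apply, hd₀, hd₁] using p.2
  · intro x x' hx
    simpa only [OrderHom.comp_coe, Function.comp_apply, hd₀, hd₁] using hd ⟨(x, x'), hx⟩
end

section
/- In an order-enriched category, if X is left Kan-injective with respect to h : A → A', if the morphism u : X → Y is left Kan-injective with respect to h, and if i : I → X is an inserter of a parallel pair (u, v) with v : X → Y arbitrary, then the object I is left Kan-injective with respect to h and the morphism i is left Kan-injective with respect to h. -/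
open CategoryTheory

/-- `g` is the (strong) left Kan extension of `f` along `h` in an order-enriched
category: `g ∘ h = f` and `g` is least with `f ≤ g ∘ h`. -/
def IsLanHom {C : Type*} [Category C] [∀ X Y : C, PartialOrder (X ⟶ Y)]
    {A A' X : C} (h : A ⟶ A') (f : A ⟶ X) (g : A' ⟶ X) : Prop :=
  h ≫ g = f ∧ ∀ g' : A' ⟶ X, f ≤ h ≫ g' → g ≤ g'

namespace IsLanHom

variable {C : Type*} [Category C] [∀ X Y : C, PartialOrder (X ⟶ Y)] {A A' X Y : C}
  {h : A ⟶ A'}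

theorem unique {f : A ⟶ X} {g₁ g₂ : A' ⟶ X} (h₁ : IsLanHom h f g₁) (h₂ : IsLanHom h f g₂) :
    g₁ = g₂ :=
  le_antisymm (h₁.2 g₂ h₂.1.ge) (h₂.2 g₁ h₁.1.ge)

theorem comp_le_comp {f : A ⟶ X} {g : A' ⟶ X} {u v : X ⟶ Y}
    (hgu : IsLanHom h (f ≫ u) (g ≫ u)) (hg : h ≫ g = f) (hle : f ≫ u ≤ f ≫ v) :
    g ≫ u ≤ g ≫ v :=
  hgu.2 _ (by rwa [← Category.assoc, hg])

theorem of_comp {I : C} {i : I ⟶ X} (hmono : ∀ {J : C} (f g : J ⟶ I), f ≫ i ≤ g ≫ i → f ≤ g)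
    (hwhisker : ∀ f₁ f₂ : A ⟶ I, f₁ ≤ f₂ → f₁ ≫ i ≤ f₂ ≫ i) {f : A ⟶ I} {k : A' ⟶ I}
    (hk : IsLanHom h (f ≫ i) (k ≫ i)) : IsLanHom h f k := by
  have hki : (h ≫ k) ≫ i = f ≫ i := by rw [Category.assoc, hk.1]
  refine ⟨le_antisymm (hmono _ _ hki.le) (hmono _ _ hki.ge), fun k' hk' => hmono _ _ (hk.2 _ ?_)⟩
  simpa only [Category.assoc] using hwhisker _ _ hk'

end IsLanHom

/-- In an order-enriched category, if `X` is left Kan-injective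
w.r.t. `h`, the morphism `u : X → Y` is left Kan-injective w.r.t. `h`, and
`i : I → X` is an inserter of `(u, v)`, then the object `I` and the morphism
`i` are left Kan-injective w.r.t. `h`. -/
theorem stmt11 {C : Type*} [Category C] [∀ X Y : C, PartialOrder (X ⟶ Y)]
    (hcomp : ∀ {X Y Z : C} (f₁ f₂ : X ⟶ Y) (g₁ g₂ : Y ⟶ Z),
      f₁ ≤ f₂ → g₁ ≤ g₂ → f₁ ≫ g₁ ≤ f₂ ≫ g₂)
    {A A' X Y I : C} (h : A ⟶ A') (u v : X ⟶ Y) (i : I ⟶ X)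
    -- `i` is an inserter of `(u, v)`:
    (hins : i ≫ u ≤ i ≫ v)
    (huniv : ∀ {J : C} (j : J ⟶ X), j ≫ u ≤ j ≫ v → ∃! k : J ⟶ I, k ≫ i = j)
    (hmono : ∀ {J : C} (f g : J ⟶ I), f ≫ i ≤ g ≫ i → f ≤ g)
    -- `X` and `Y` are left Kan-injective w.r.t. `h`:
    (hX : ∀ f : A ⟶ X, ∃ g : A' ⟶ X, IsLanHom h f g)
    (hY : ∀ f : A ⟶ Y, ∃ g : A' ⟶ Y, IsLanHom h f g)
    -- `u` is left Kan-injective w.r.t. `h`: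
    (hu : ∀ (f : A ⟶ X) (g : A' ⟶ X) (g' : A' ⟶ Y),
      IsLanHom h f g → IsLanHom h (f ≫ u) g' → g ≫ u = g') :
    -- the object `I` is left Kan-injective w.r.t. `h`:
    (∀ f : A ⟶ I, ∃ g : A' ⟶ I, IsLanHom h f g) ∧
    -- the morphism `i` is left Kan-injective w.r.t. `h`:
    (∀ (f : A ⟶ I) (g : A' ⟶ I) (g' : A' ⟶ X),
      IsLanHom h f g → IsLanHom h (f ≫ i) g' → g ≫ i = g') := by
  -- Since `u` preserves the extension `g` of `f ≫ i`, the inequality `f ≫ i ≫ u ≤ f ≫ i ≫ v`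
  -- extends to `g`, so `g` factors through the inserter.
  have lift : ∀ (f : A ⟶ I) (g : A' ⟶ X), IsLanHom h (f ≫ i) g →
      ∃ k : A' ⟶ I, k ≫ i = g ∧ IsLanHom h f k := by
    intro f g hg
    obtain ⟨w, hw⟩ := hY ((f ≫ i) ≫ u)
    obtain rfl : g ≫ u = w := hu _ g w hg hw
    have hfi : (f ≫ i) ≫ u ≤ (f ≫ i) ≫ v := by
      simpa only [Category.assoc] using hcomp f f _ _ le_rfl hins
    obtain ⟨k, rfl, -⟩ := huniv g (hw.comp_le_comp hg.1 hfi)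
    exact ⟨k, rfl, hg.of_comp hmono fun _ _ hf => hcomp _ _ i i hf le_rfl⟩
  refine ⟨fun f => ?_, fun f g g' hg hg' => ?_⟩
  · obtain ⟨g', hg'⟩ := hX (f ≫ i)
    obtain ⟨k, -, hk⟩ := lift f g' hg'
    exact ⟨k, hk⟩
  · obtain ⟨k, rfl, hk⟩ := lift f g' hg'
    rw [hg.unique hk]
end

section
/- In an order-enriched category with an inserter-ideal reflective subcategory C (with reflector F and units η_X : X → FX), for any parallel pair f, g : FX → A with f a morphism of C: if f ∘ η_X ≤ g ∘ η_X then f ≤ g. -/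
/-!
Let `i : I ⟶ F X` be an inserter of `(f, g)`. It lies in the subcategory because `f` does, and
`η X` factors through it because `η X ≫ f ≤ η X ≫ g`; reflecting that factorization gives
`s : F X ⟶ I` with `η X ≫ s ≫ i = η X`, so `s ≫ i = 𝟙` by uniqueness of factorizations through
`η X`. Hence `f = s ≫ i ≫ f ≤ s ≫ i ≫ g = g`.
-/

open CategoryTheory

/-- `i : I ⟶ X` is an inserter of the parallel pair `(u, v)` in an
order-enriched category. -/
def IsInserter {C : Type*} [Category C] [∀ X Y : C, PartialOrder (X ⟶ Y)]
    {I X Y : C} (u v : X ⟶ Y) (i : I ⟶ X) : Prop :=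
  i ≫ u ≤ i ≫ v ∧
  (∀ {J : C} (j : J ⟶ X), j ≫ u ≤ j ≫ v → ∃! k : J ⟶ I, k ≫ i = j) ∧
  (∀ {J : C} (f g : J ⟶ I), f ≫ i ≤ g ≫ i → f ≤ g)

theorem reflection_endo_eq_id {C : Type*} [Category C]
    (objP : C → Prop) (homP : ∀ {X Y : C}, (X ⟶ Y) → Prop)
    (hid : ∀ {X : C}, objP X → homP (𝟙 X))
    (F : C → C) (η : ∀ X : C, X ⟶ F X) (hFobj : ∀ X : C, objP (F X))
    (hrefl : ∀ {X Y : C}, objP Y → ∀ f : X ⟶ Y,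
      ∃! f' : F X ⟶ Y, homP f' ∧ η X ≫ f' = f)
    {X : C} {e : F X ⟶ F X} (he : homP e) (hηe : η X ≫ e = η X) : e = 𝟙 (F X) :=
  (hrefl (hFobj X) (η X)).unique ⟨he, hηe⟩ ⟨hid (hFobj X), Category.comp_id _⟩

section

variable {C : Type*} [Category C] [∀ X Y : C, PartialOrder (X ⟶ Y)]

theorem IsInserter.comp_le {I X Y : C} {u v : X ⟶ Y} {i : I ⟶ X} (hi : IsInserter u v i) :
    i ≫ u ≤ i ≫ v :=
  hi.1

theorem IsInserter.exists_lift {I X Y J : C} {u v : X ⟶ Y} {i : I ⟶ X} (hi : IsInserter u v i)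
    (j : J ⟶ X) (hj : j ≫ u ≤ j ≫ v) : ∃ k : J ⟶ I, k ≫ i = j :=
  (hi.2.1 j hj).exists

theorem le_of_comp_le_of_comp_eq_id
    (hcomp : ∀ {X Y Z : C} (f₁ f₂ : X ⟶ Y) (g₁ g₂ : Y ⟶ Z),
      f₁ ≤ f₂ → g₁ ≤ g₂ → f₁ ≫ g₁ ≤ f₂ ≫ g₂)
    {X Y A : C} {i : Y ⟶ X} {s : X ⟶ Y} (hs : s ≫ i = 𝟙 X) {f g : X ⟶ A}
    (h : i ≫ f ≤ i ≫ g) : f ≤ g := by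
  simpa only [← Category.assoc, hs, Category.id_comp] using hcomp s s _ _ le_rfl h

end

/-- In an order-enriched category with inserters, for an
inserter-ideal reflective subcategory `(objP, homP)` with reflector `F` and
units `η_X : X ⟶ F X`, every parallel pair `f, g : F X ⟶ A` with `f` in the
subcategory satisfies: `f ∘ η_X ≤ g ∘ η_X` implies `f ≤ g`. -/
theorem stmt12 {C : Type*} [Category C] [∀ X Y : C, PartialOrder (X ⟶ Y)]
    (hcomp : ∀ {X Y Z : C} (f₁ f₂ : X ⟶ Y) (g₁ g₂ : Y ⟶ Z),
      f₁ ≤ f₂ → g₁ ≤ g₂ → f₁ ≫ g₁ ≤ f₂ ≫ g₂)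
    -- the subcategory:
    (objP : C → Prop) (homP : ∀ {X Y : C}, (X ⟶ Y) → Prop)
    (hdom : ∀ {X Y : C} (f : X ⟶ Y), homP f → objP X ∧ objP Y)
    (hid : ∀ {X : C}, objP X → homP (𝟙 X))
    (hcompP : ∀ {X Y Z : C} (f : X ⟶ Y) (g : Y ⟶ Z), homP f → homP g → homP (f ≫ g))
    -- inserters exist:
    (hinsEx : ∀ {X Y : C} (u v : X ⟶ Y), ∃ (I : C) (i : I ⟶ X), IsInserter u v i)
    -- the subcategory is inserter-ideal:
    (hideal : ∀ {I X Y : C} (u v : X ⟶ Y) (i : I ⟶ X),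
      homP u → IsInserter u v i → homP i)
    -- the subcategory is reflective, with reflector `F` and units `η`:
    (F : C → C) (η : ∀ X : C, X ⟶ F X) (hFobj : ∀ X : C, objP (F X))
    (hrefl : ∀ {X Y : C}, objP Y → ∀ f : X ⟶ Y,
      ∃! f' : F X ⟶ Y, homP f' ∧ η X ≫ f' = f) :
    ∀ {X A : C} (f g : F X ⟶ A), homP f → η X ≫ f ≤ η X ≫ g → f ≤ g := by
  intro X A f g hf hle
  obtain ⟨I, i, hins⟩ := hinsEx f g
  have hiP : homP i := hideal f g i hf hins
  obtain ⟨k, hk⟩ := hins.exists_lift (η X) hle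
  obtain ⟨s, ⟨hsP, hs⟩, -⟩ := hrefl (hdom i hiP).1 k
  have hsection : s ≫ i = 𝟙 (F X) :=
    reflection_endo_eq_id objP homP hid F η hFobj hrefl (hcompP s i hsP hiP)
      (by rw [← Category.assoc, hs, hk])
  exact le_of_comp_le_of_comp_eq_id hcomp hsection hins.comp_le
end

section
/- Let T = (T, η, μ) be a Kock-Zöberlein monad on an order-enriched category and α : TX → X a T-algebra. Then X is left Kan-injective with respect to each unit η_A: for every f : A → X, the morphism α ∘ Tf : TA → X satisfies (α ∘ Tf) ∘ η_A = f and is the least g : TA → X with f ≤ g ∘ η_A. -/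
/-!
Since `η_X ≫ α = 𝟙`, naturality of `η` gives `η_A ≫ T f ≫ α = f`. For minimality, given
`f ≤ η_A ≫ g`, apply `T` and use the Kock–Zöberlein inequality `T η_A ≤ η_{TA}`:
`T f ≫ α ≤ T η_A ≫ T g ≫ α ≤ η_{TA} ≫ T g ≫ α = g ≫ η_X ≫ α = g`.
-/

open CategoryTheory

namespace CategoryTheory.Monad

variable {C : Type*} [Category C] (T : Monad C) {X : C} {α : T.obj X ⟶ X}

theorem unit_comp_map_comp_of_unit_comp_eq_id (hα : T.η.app X ≫ α = 𝟙 X) {A : C}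
    (f : A ⟶ X) : T.η.app A ≫ T.map f ≫ α = f := by
  rw [← Category.assoc, ← T.η.naturality f, Functor.id_map, Category.assoc, hα]
  exact Category.comp_id f

theorem map_comp_le_of_map_unit_le [∀ X Y : C, Preorder (X ⟶ Y)]
    (hwhisker : ∀ {X Y Z : C} (f₁ f₂ : X ⟶ Y) (g : Y ⟶ Z), f₁ ≤ f₂ → f₁ ≫ g ≤ f₂ ≫ g)
    (hα : T.η.app X ≫ α = 𝟙 X) {A : C} (hKZ : T.map (T.η.app A) ≤ T.η.app (T.obj A))
    (g : T.obj A ⟶ X) : T.map (T.η.app A ≫ g) ≫ α ≤ g :=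
  calc T.map (T.η.app A ≫ g) ≫ α = T.map (T.η.app A) ≫ T.map g ≫ α := by
        rw [Functor.map_comp, Category.assoc]
    _ ≤ T.η.app (T.obj A) ≫ T.map g ≫ α := hwhisker _ _ _ hKZ
    _ = g := T.unit_comp_map_comp_of_unit_comp_eq_id hα g

end CategoryTheory.Monad

/-- For a Kock-Zöberlein monad `T` on an order-enriched category
and a `T`-algebra `α : T X ⟶ X`, the object `X` is left Kan-injective w.r.t.
each unit `η_A`: for every `f : A ⟶ X`, the morphism `T f ≫ α` satisfies
`η_A ≫ (T f ≫ α) = f` and is the least `g` with `f ≤ η_A ≫ g`. -/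
theorem stmt14 {C : Type*} [Category C] [∀ X Y : C, PartialOrder (X ⟶ Y)]
    (hcomp : ∀ {X Y Z : C} (f₁ f₂ : X ⟶ Y) (g₁ g₂ : Y ⟶ Z),
      f₁ ≤ f₂ → g₁ ≤ g₂ → f₁ ≫ g₁ ≤ f₂ ≫ g₂)
    (T : Monad C)
    (hT : ∀ {X Y : C} (f g : X ⟶ Y), f ≤ g → T.map f ≤ T.map g)
    (hKZ : ∀ X : C, T.map (T.η.app X) ≤ T.η.app (T.obj X))
    {X : C} (α : T.obj X ⟶ X)
    (hα₁ : T.η.app X ≫ α = 𝟙 X) (hα₂ : T.μ.app X ≫ α = T.map α ≫ α) :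
    ∀ {A : C} (f : A ⟶ X),
      T.η.app A ≫ (T.map f ≫ α) = f ∧
      ∀ g : T.obj A ⟶ X, f ≤ T.η.app A ≫ g → T.map f ≫ α ≤ g := by
  have hwhisker {X Y Z : C} (f₁ f₂ : X ⟶ Y) (g : Y ⟶ Z) (h : f₁ ≤ f₂) : f₁ ≫ g ≤ f₂ ≫ g :=
    hcomp _ _ _ _ h le_rfl
  intro A f
  refine ⟨T.unit_comp_map_comp_of_unit_comp_eq_id hα₁ f, fun g hg => ?_⟩
  calc T.map f ≫ α ≤ T.map (T.η.app A ≫ g) ≫ α := hwhisker _ _ _ (hT _ _ hg)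
    _ ≤ g := T.map_comp_le_of_map_unit_le hwhisker hα₁ (hKZ A) g
end

section
/- Let C be a subcategory of an order-enriched category closed under coprojections, in the sense that: (a) if r : C₀ → X is a coprojection (there is s : X → C₀ with r ∘ s = id and id ≤ s ∘ r) and C₀ ∈ C, then X ∈ C. Show that every Kan-injectivity subcategory LInj(H) satisfies (a): if r : C₀ → X is a coprojection and C₀ is left Kan-injective w.r.t. every h ∈ H, then so is X; moreover Lan_h f = r ∘ Lan_h (s ∘ f) for f : A → X and h : A → A' in H. -/
open CategoryTheory

theorem IsLanHom.comp_of_retraction {C : Type*} [Category C]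
    [∀ X Y : C, PartialOrder (X ⟶ Y)] {A A' C₀ X : C} {h : A ⟶ A'} {f : A ⟶ X}
    {g₀ : A' ⟶ C₀} {r : C₀ ⟶ X} {s : X ⟶ C₀} (hrs : s ≫ r = 𝟙 X)
    (hs : Monotone fun k : A ⟶ X => k ≫ s) (hr : Monotone fun k : A' ⟶ C₀ => k ≫ r)
    (hg₀ : IsLanHom h (f ≫ s) g₀) : IsLanHom h f (g₀ ≫ r) := by
  obtain ⟨hg₀h, hg₀_min⟩ := hg₀
  refine ⟨by rw [← Category.assoc, hg₀h, Category.assoc, hrs, Category.comp_id], ?_⟩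
  intro g' hfg'
  have hg₀g' : g₀ ≤ g' ≫ s := hg₀_min _ (by simpa only [Category.assoc] using hs hfg')
  simpa only [Category.assoc, hrs, Category.comp_id] using hr hg₀g'

/-- Kan-injectivity subcategories are closed under coprojections:
if `r : C₀ ⟶ X` is a coprojection (with `s : X ⟶ C₀`, `r ∘ s = id_X` and
`id_{C₀} ≤ s ∘ r`) and `C₀` is left Kan-injective w.r.t. `h`, then so is `X`;
moreover `Lan_h f = r ∘ Lan_h (s ∘ f)` for every `f : A ⟶ X`. -/
theorem stmt16 {C : Type*} [Category C] [∀ X Y : C, PartialOrder (X ⟶ Y)]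
    (hcomp : ∀ {X Y Z : C} (f₁ f₂ : X ⟶ Y) (g₁ g₂ : Y ⟶ Z),
      f₁ ≤ f₂ → g₁ ≤ g₂ → f₁ ≫ g₁ ≤ f₂ ≫ g₂)
    {A A' C₀ X : C} (h : A ⟶ A')
    (r : C₀ ⟶ X) (s : X ⟶ C₀)
    (hrs : s ≫ r = 𝟙 X) (hsr : 𝟙 C₀ ≤ r ≫ s)
    -- `C₀` is left Kan-injective w.r.t. `h`:
    (hC₀ : ∀ f : A ⟶ C₀, ∃ g : A' ⟶ C₀, IsLanHom h f g) :
    -- `X` is left Kan-injective w.r.t. `h`: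
    (∀ f : A ⟶ X, ∃ g : A' ⟶ X, IsLanHom h f g) ∧
    -- the formula `Lan_h f = r ∘ Lan_h (s ∘ f)`:
    (∀ (f : A ⟶ X) (g₀ : A' ⟶ C₀), IsLanHom h (f ≫ s) g₀ → IsLanHom h f (g₀ ≫ r)) := by
  have postcomp_mono : ∀ {Y Z W : C} (k : Z ⟶ W), Monotone fun j : Y ⟶ Z => j ≫ k :=
    fun k _ _ hj => hcomp _ _ k k hj le_rfl
  have lan_formula : ∀ (f : A ⟶ X) (g₀ : A' ⟶ C₀), IsLanHom h (f ≫ s) g₀ →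
      IsLanHom h f (g₀ ≫ r) :=
    fun _ _ hg₀ => hg₀.comp_of_retraction hrs (postcomp_mono s) (postcomp_mono r)
  refine ⟨fun f => ?_, lan_formula⟩
  obtain ⟨g₀, hg₀⟩ := hC₀ (f ≫ s)
  exact ⟨g₀ ≫ r, lan_formula f g₀ hg₀⟩
end

section
/- In an order-enriched category where morphisms of a class E are epimorphisms and morphisms of a class M are strong monomorphisms, with (E, M)-factorizations: if m ∘ u ≤ m ∘ v for a strong monomorphism m, where the coinserter c of (u, v) exists, then u ≤ v. (In particular, in a cocomplete cowellpowered order-enriched category the (epi, strong mono) factorization system is proper: strong monomorphisms are order-monomorphisms.) -/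
/-!
The map `d : Q ⟶ B` induced by `m` satisfies `c ≫ d = m`, so the coinserter `c` is a strong
monomorphism; being also an epimorphism, it is an isomorphism. Cancelling it from
`u ≫ c ≤ v ≫ c` gives `u ≤ v`.
-/

open CategoryTheory

section OrderEnriched

variable {C : Type*} [Category C] [∀ X Y : C, PartialOrder (X ⟶ Y)]

theorem epi_of_comp_le_comp_imp_le {A Q : C} (c : A ⟶ Q)
    (hc : ∀ {Z : C} (p q : Q ⟶ Z), c ≫ p ≤ c ≫ q → p ≤ q) : Epi c :=
  ⟨fun p q h => le_antisymm (hc p q h.le) (hc q p h.ge)⟩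

theorem le_of_comp_le_comp_of_isSplitMono
    (hwhisker : ∀ {X Y Z : C} (f₁ f₂ : X ⟶ Y) (g : Y ⟶ Z), f₁ ≤ f₂ → f₁ ≫ g ≤ f₂ ≫ g)
    {X A Q : C} {u v : X ⟶ A} (c : A ⟶ Q) [IsSplitMono c] (h : u ≫ c ≤ v ≫ c) : u ≤ v := by
  simpa using hwhisker _ _ (retraction c) h

end OrderEnriched

/-- In an order-enriched category, if `m ∘ u ≤ m ∘ v` for a
strong monomorphism `m`, and the coinserter of `(u, v)` exists, then `u ≤ v`.
In particular strong monomorphisms are order-monomorphisms. -/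
theorem stmt18 {C : Type*} [Category C] [∀ X Y : C, PartialOrder (X ⟶ Y)]
    (hcomp : ∀ {X Y Z : C} (f₁ f₂ : X ⟶ Y) (g₁ g₂ : Y ⟶ Z),
      f₁ ≤ f₂ → g₁ ≤ g₂ → f₁ ≫ g₁ ≤ f₂ ≫ g₂)
    {X A B Q : C} (u v : X ⟶ A) (m : A ⟶ B) (hm : StrongMono m)
    -- the coinserter `c : A ⟶ Q` of `(u, v)`:
    (c : A ⟶ Q) (hc : u ≫ c ≤ v ≫ c)
    (hcouniv : ∀ {Z : C} (d : A ⟶ Z), u ≫ d ≤ v ≫ d → ∃! d' : Q ⟶ Z, c ≫ d' = d)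
    (hcepi : ∀ {Z : C} (p q : Q ⟶ Z), c ≫ p ≤ c ≫ q → p ≤ q)
    (hle : u ≫ m ≤ v ≫ m) :
    u ≤ v := by
  obtain ⟨d, hd, -⟩ := hcouniv m hle
  have : Epi c := epi_of_comp_le_comp_imp_le c hcepi
  have : StrongMono (c ≫ d) := hd ▸ hm
  have : StrongMono c := strongMono_of_strongMono c d
  have : IsIso c := isIso_of_epi_of_strongMono c
  exact le_of_comp_le_comp_of_isSplitMono (fun _ _ _ h => hcomp _ _ _ _ h le_rfl) c hc
end
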